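/- arXiv:1109.3526 — 11 statements merged into one kernel-verified Lean document; each statement's English description precedes it below -/
import Mathlib

section
/- Let n ≥ 1, let β ∈ ℂ, let φ, ψ ∈ ℝ, and set w_j = exp(2πij/n) for j = 0,…,n−1. Assume the 2n nodes {e^{iφ} w_j, β + e^{iψ} w_j : j = 0,…,n−1} are pairwise distinct. Let P and Q be complex polynomials of degree at most 2n−1 such that P(e^{iφ} w_j) = 1 and P(β + e^{iψ} w_j) = 0 for all j, and Q(e^{i(ψ+π)} w_j) = 1 and Q(β + e^{i(φ+π)} w_j) = 0 for all j. Then P(z) + Q(β − z) = 1 for every z ∈ ℂ. -/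
/-- Symmetry of the Lagrange interpolation polynomials:
`p_{φ,ψ}(z) + p_{ψ+π,φ+π}(β - z) = 1`. -/
theorem lagrange_symmetry (n : ℕ) (hn : 1 ≤ n) (β : ℂ) (φ ψ : ℝ)
    (w : ℕ → ℂ) (hw : ∀ j, w j = Complex.exp (2 * (Real.pi : ℂ) * Complex.I * j / n))
    (hdist : Function.Injective
      (Sum.elim (fun j : Fin n => Complex.exp (Complex.I * (φ : ℂ)) * w j)
        (fun j : Fin n => β + Complex.exp (Complex.I * (ψ : ℂ)) * w j)))
    (P Q : Polynomial ℂ)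
    (hPdeg : P.degree ≤ (2 * n - 1 : ℕ)) (hQdeg : Q.degree ≤ (2 * n - 1 : ℕ))
    (hP1 : ∀ j : Fin n, P.eval (Complex.exp (Complex.I * (φ : ℂ)) * w j) = 1)
    (hP0 : ∀ j : Fin n, P.eval (β + Complex.exp (Complex.I * (ψ : ℂ)) * w j) = 0)
    (hQ1 : ∀ j : Fin n, Q.eval (Complex.exp (Complex.I * ((ψ : ℂ) + Real.pi)) * w j) = 1)
    (hQ0 : ∀ j : Fin n, Q.eval (β + Complex.exp (Complex.I * ((φ : ℂ) + Real.pi)) * w j) = 0) :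
    ∀ z : ℂ, P.eval z + Q.eval (β - z) = 1 := by
  have hneg : ∀ θ : ℝ, Complex.exp (Complex.I * ((θ : ℂ) + Real.pi))
      = - Complex.exp (Complex.I * (θ : ℂ)) := by
    intro θ
    rw [mul_add, Complex.exp_add, mul_comm Complex.I (Real.pi : ℂ), Complex.exp_pi_mul_I]
    ring
  set R : Polynomial ℂ :=
    P + Q.comp (Polynomial.C β - Polynomial.X) - 1 with hR
  have hcomp : ∀ z : ℂ, R.eval z = P.eval z + Q.eval (β - z) - 1 := by
    intro z; simp [hR, Polynomial.eval_comp]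
  have hR0 : R = 0 := by
    apply Polynomial.eq_zero_of_natDegree_lt_card_of_eval_eq_zero R hdist
    · rintro (j | j)
      · have h1 := hP1 j
        have h2 := hQ0 j
        rw [hneg φ] at h2
        simp only [Sum.elim_inl, hcomp, h1]
        rw [show β - Complex.exp (Complex.I * (φ : ℂ)) * w j
            = β + -Complex.exp (Complex.I * (φ : ℂ)) * w j by ring] at *
        rw [h2]; ring
      · have h1 := hP0 j
        have h2 := hQ1 j
        rw [hneg ψ] at h2
        simp only [Sum.elim_inr, hcomp, h1]
        rw [show β - (β + Complex.exp (Complex.I * (ψ : ℂ)) * w j)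
            = -Complex.exp (Complex.I * (ψ : ℂ)) * w j by ring, h2]
        ring
    · have hP : P.natDegree ≤ 2 * n - 1 := Polynomial.natDegree_le_iff_degree_le.mpr hPdeg
      have hQ : Q.natDegree ≤ 2 * n - 1 := Polynomial.natDegree_le_iff_degree_le.mpr hQdeg
      have hQc : (Q.comp (Polynomial.C β - Polynomial.X)).natDegree ≤ 2 * n - 1 := by
        rw [Polynomial.natDegree_comp]
        have : (Polynomial.C β - Polynomial.X).natDegree = 1 := by
          simpa using Polynomial.natDegree_X_sub_C (R := ℂ) β |>.symm ▸ by
            rw [show Polynomial.C β - Polynomial.X = -(Polynomial.X - Polynomial.C β) by ring,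
              Polynomial.natDegree_neg, Polynomial.natDegree_X_sub_C]
        rw [this, mul_one]; exact hQ
      have : R.natDegree ≤ 2 * n - 1 := by
        refine le_trans (Polynomial.natDegree_sub_le _ _) ?_
        simp only [max_le_iff]
        constructor
        · exact le_trans (Polynomial.natDegree_add_le _ _) (by simp [hP, hQc])
        · simpa using Nat.one_le_iff_ne_zero.mp (by omega)
      have hlt : 2 * n - 1 < Fintype.card (Fin n ⊕ Fin n) := by
        simp [Fintype.card_sum]; omega
      omega
  intro z
  have := hcomp z
  rw [hR0] at this
  simp at this
  linear_combination -this
end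

section
/- Let n ≥ 1, let β > 2 be real, let φ, ψ ∈ ℝ, set w_j = exp(2πij/n) for j = 0,…,n−1, and fix m ∈ {0,…,n−1}. Then for every z ∈ ℂ with z ≠ e^{iφ} w_m, the Lagrange basis product satisfies: [∏_{j=0, j≠m}^{n−1} (z − e^{iφ}w_j)/(e^{iφ}w_m − e^{iφ}w_j)] · [∏_{j=0}^{n−1} (z − (β + e^{iψ}w_j))/(e^{iφ}w_m − (β + e^{iψ}w_j))] = [((z−β)^n − e^{iψn})/((e^{iφ}w_m − β)^n − e^{iψn})] · [(z^n − e^{iφn})/(z − e^{iφ}w_m)] · [1/(n (w_m e^{iφ})^{n−1})]. (The hypothesis β > 2 guarantees |e^{iφ}w_m − β| > 1, so the denominator (e^{iφ}w_m − β)^n − e^{iψn} is nonzero, and all the nodes appearing in the denominators are distinct from e^{iφ}w_m.) -/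
open Complex Polynomial Finset

/-- Explicit formula for the Lagrange cardinal polynomial `q_{φ,ψ,m}` associated with the
`2n` nodes `{e^{iφ}w_j, β + e^{iψ}w_j}`. -/
theorem lagrange_cardinal_formula (n : ℕ) (hn : 1 ≤ n) (β : ℝ) (hβ : 2 < β) (φ ψ : ℝ)
    (w : ℕ → ℂ) (hw : ∀ j, w j = Complex.exp (2 * (Real.pi : ℂ) * Complex.I * j / n))
    (m : Fin n) (z : ℂ) (hz : z ≠ Complex.exp (Complex.I * (φ : ℂ)) * w m) :
    (∏ j ∈ Finset.univ.erase m,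
        (z - Complex.exp (Complex.I * (φ : ℂ)) * w j) /
          (Complex.exp (Complex.I * (φ : ℂ)) * w m -
            Complex.exp (Complex.I * (φ : ℂ)) * w j)) *
      (∏ j : Fin n,
        (z - ((β : ℂ) + Complex.exp (Complex.I * (ψ : ℂ)) * w j)) /
          (Complex.exp (Complex.I * (φ : ℂ)) * w m -
            ((β : ℂ) + Complex.exp (Complex.I * (ψ : ℂ)) * w j))) =
    (((z - (β : ℂ)) ^ n - Complex.exp (Complex.I * (ψ : ℂ) * n)) /
        ((Complex.exp (Complex.I * (φ : ℂ)) * w m - (β : ℂ)) ^ n -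
          Complex.exp (Complex.I * (ψ : ℂ) * n))) *
      ((z ^ n - Complex.exp (Complex.I * (φ : ℂ) * n)) /
        (z - Complex.exp (Complex.I * (φ : ℂ)) * w m)) *
      (1 / ((n : ℂ) * (w m * Complex.exp (Complex.I * (φ : ℂ))) ^ (n - 1))) := by
  classical
  have hn0 : n ≠ 0 := by omega
  set ζ : ℂ := Complex.exp (2 * (Real.pi : ℂ) * Complex.I / n) with hζdef
  have hζ : IsPrimitiveRoot ζ n := Complex.isPrimitiveRoot_exp n hn0
  have hwz : ∀ j : ℕ, w j = ζ ^ j := by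
    intro j
    rw [hw j, hζdef, ← Complex.exp_nat_mul]
    congr 1
    ring
  set ε : ℂ := Complex.exp (Complex.I * (φ : ℂ)) with hεdef
  set δ : ℂ := Complex.exp (Complex.I * (ψ : ℂ)) with hδdef
  have hεn : Complex.exp (Complex.I * (φ : ℂ) * n) = ε ^ n := by
    rw [hεdef, ← Complex.exp_nat_mul]; congr 1; ring
  have hδn : Complex.exp (Complex.I * (ψ : ℂ) * n) = δ ^ n := by
    rw [hδdef, ← Complex.exp_nat_mul]; congr 1; ring
  -- key value identity
  have key : ∀ x α : ℂ, ∏ j ∈ Finset.range n, (x - α * ζ ^ j) = x ^ n - α ^ n := by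
    intro x α
    have h := congrArg (Polynomial.eval x)
      (X_pow_sub_C_eq_prod hζ (Nat.pos_of_ne_zero hn0) (rfl : α ^ n = α ^ n))
    simp only [Polynomial.eval_sub, Polynomial.eval_pow, Polynomial.eval_X, Polynomial.eval_C,
      Polynomial.eval_prod, eval_mul] at h
    rw [h]
    exact Finset.prod_congr rfl fun i _ => by ring
  have hprod : ∀ x α : ℂ, ∏ j : Fin n, (x - α * w (j : ℕ)) = x ^ n - α ^ n := by
    intro x α
    rw [Fin.prod_univ_eq_prod_range (fun j => x - α * w j) n, ← key x α]
    exact Finset.prod_congr rfl fun i _ => by rw [hwz]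
  set v : Fin n → ℂ := fun j => ε * w (j : ℕ) with hv
  -- the nodal polynomial
  have hnodal : Lagrange.nodal Finset.univ v = X ^ n - C (ε ^ n) := by
    rw [Lagrange.nodal_eq,
      X_pow_sub_C_eq_prod hζ (Nat.pos_of_ne_zero hn0) (rfl : ε ^ n = ε ^ n),
      ← Fin.prod_univ_eq_prod_range (fun i => (X : ℂ[X]) - C (ζ ^ i * ε)) n]
    exact Finset.prod_congr rfl fun i _ => by simp only [hv]; rw [hwz, mul_comm]
  -- denominator product of the first factor
  have hD1 : ∏ j ∈ Finset.univ.erase m, (v m - v j) = (n : ℂ) * (v m) ^ (n - 1) := by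
    have h1 := Lagrange.eval_nodal_derivative_eval_node_eq (s := Finset.univ) (v := v)
      (Finset.mem_univ m)
    rw [hnodal] at h1
    simp only [derivative_sub, derivative_X_pow, derivative_C, sub_zero, eval_mul, eval_pow,
      eval_natCast, eval_X, Lagrange.eval_nodal] at h1
    rw [← h1, Polynomial.eval_C]
  -- numerator product of the first factor
  have hN1 : (z - v m) * ∏ j ∈ Finset.univ.erase m, (z - v j) = z ^ n - ε ^ n := by
    rw [Finset.mul_prod_erase Finset.univ (fun j => z - v j) (Finset.mem_univ m)]
    exact hprod z ε
  have hzvm : z - v m ≠ 0 := sub_ne_zero.mpr hz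
  -- second factor numerator and denominator
  have hN2 : ∏ j : Fin n, (z - ((β : ℂ) + δ * w (j : ℕ))) = (z - (β : ℂ)) ^ n - δ ^ n := by
    rw [← hprod (z - (β : ℂ)) δ]
    exact Finset.prod_congr rfl fun j _ => by ring
  have hD2 : ∏ j : Fin n, (v m - ((β : ℂ) + δ * w (j : ℕ))) =
      (v m - (β : ℂ)) ^ n - δ ^ n := by
    rw [← hprod (v m - (β : ℂ)) δ]
    exact Finset.prod_congr rfl fun j _ => by ring
  rw [Finset.prod_div_distrib, Finset.prod_div_distrib, hεn, hδn]
  show (∏ j ∈ Finset.univ.erase m, (z - v j)) / (∏ j ∈ Finset.univ.erase m, (v m - v j)) *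
      ((∏ j : Fin n, (z - ((β : ℂ) + δ * w (j : ℕ)))) /
        (∏ j : Fin n, (v m - ((β : ℂ) + δ * w (j : ℕ))))) = _
  rw [hD1, hN2, hD2]
  have hfin : ∏ j ∈ Finset.univ.erase m, (z - v j) = (z ^ n - ε ^ n) / (z - v m) := by
    rw [eq_div_iff hzvm, mul_comm, hN1]
  rw [hfin]
  simp only [hv]
  ring
end

section
/- Let n ≥ 1 and let β ∈ ℂ with β ≠ 0, and define the polynomial P̄_n(z) = (1 − z/β)^n · Σ_{j=0}^{n−1} (z/β)^j · (n+j−1)!/(j!(n−1)!). Then P̄_n has degree 2n−1 and satisfies the Hermite interpolation conditions: P̄_n(0) = 1, P̄_n(β) = 0, and the j-th derivatives satisfy P̄_n^{(j)}(0) = 0 and P̄_n^{(j)}(β) = 0 for j = 1,…,n−1. -/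
/-- The ensemble average polynomial
`P̄_n(z) = (1 - z/β)^n ∑_{j=0}^{n-1} (z/β)^j (n+j-1)!/(j!(n-1)!)`. -/
noncomputable def ensembleAvg (n : ℕ) (β : ℂ) (z : ℂ) : ℂ :=
  (1 - z / β) ^ n * ∑ j ∈ Finset.range n,
    (z / β) ^ j *
      ((Nat.factorial (n + j - 1) : ℂ) /
        ((Nat.factorial j : ℂ) * (Nat.factorial (n - 1) : ℂ)))

/-!
With `x = z / β`, `P̄_n(z) = H_n(x)` where `H_n(x) = (1 - x)^n B_n(x)` and `B_n` is the truncation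
at order `n` of the power series `(1 - x)^{-n} = ∑ C(n-1+j, n-1) x^j`. Hence `H_n ≡ 1 mod x^n`,
and `(x - 1)^n ∣ H_n` by construction, so all derivatives of order `< n` of `H_n - 1` vanish at `0`
and those of `H_n` vanish at `1`. The degree is `n + (n - 1)` since the top coefficient of `B_n`
is a nonzero binomial coefficient.
-/

open Polynomial Nat

namespace Polynomial

section CommRing

variable {R : Type*} [CommRing R]

theorem eval_iterate_derivative_eq_zero_of_X_sub_C_pow_dvd {p : R[X]} {a : R} {n j : ℕ}
    (h : (X - C a) ^ n ∣ p) (hj : j < n) : (derivative^[j] p).eval a = 0 :=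
  dvd_iff_isRoot.mp <| (dvd_pow_self _ (Nat.sub_ne_zero_of_lt hj)).trans
    (pow_sub_dvd_iterate_derivative_of_pow_dvd j h)

theorem eval_trunc (f : PowerSeries R) (n : ℕ) (x : R) :
    (PowerSeries.trunc n f).eval x = ∑ j ∈ Finset.range n, PowerSeries.coeff j f * x ^ j := by
  simp only [PowerSeries.trunc_apply, eval_finsetSum, eval_monomial, Finset.range_eq_Ico]

variable (R) in
noncomputable def hermiteOneZero (n : ℕ) : R[X] :=
  (1 - X) ^ n * PowerSeries.trunc n (PowerSeries.invOneSubPow R n).val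

theorem X_pow_dvd_hermiteOneZero_sub_one (n : ℕ) : X ^ n ∣ hermiteOneZero R n - 1 := by
  cases n with
  | zero => simp
  | succ n =>
    have htrunc : PowerSeries.trunc (n + 1) (hermiteOneZero R (n + 1) : PowerSeries R) = 1 := by
      rw [hermiteOneZero, coe_mul, coe_pow, coe_sub, coe_one, coe_X,
        PowerSeries.trunc_mul_trunc, ← PowerSeries.invOneSubPow_inv_eq_one_sub_pow,
        Units.inv_val, PowerSeries.trunc_one]
    refine X_pow_dvd_iff.mpr fun d hd => ?_
    rw [coeff_sub, ← htrunc, PowerSeries.coeff_trunc, if_pos hd, coeff_coe, sub_self]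

theorem X_sub_one_pow_dvd_hermiteOneZero (n : ℕ) : (X - C 1) ^ n ∣ hermiteOneZero R n :=
  (pow_dvd_pow_of_dvd ⟨-1, by simp⟩ n).mul_right _

end CommRing

theorem natDegree_hermiteOneZero {R : Type*} [CommRing R] [IsDomain R] [CharZero R] {n : ℕ}
    (hn : 1 ≤ n) : (hermiteOneZero R n).natDegree = 2 * n - 1 := by
  obtain ⟨m, rfl⟩ : ∃ m, n = m + 1 := ⟨n - 1, by omega⟩
  set T := PowerSeries.trunc (m + 1) (PowerSeries.invOneSubPow R (m + 1)).val
  have hlead : T.coeff m ≠ 0 := by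
    rw [PowerSeries.coeff_trunc, if_pos m.lt_succ_self,
      PowerSeries.invOneSubPow_val_succ_eq_mk_add_choose, PowerSeries.coeff_mk]
    exact Nat.cast_ne_zero.mpr (Nat.choose_pos (by omega)).ne'
  have hT : T.natDegree = m :=
    le_antisymm (Nat.lt_succ_iff.mp (PowerSeries.natDegree_trunc_lt _ _))
      (le_natDegree_of_ne_zero hlead)
  have hlin : (1 - X : R[X]).natDegree = 1 := by
    rw [← neg_sub, natDegree_neg, ← C_1, natDegree_X_sub_C]
  rw [hermiteOneZero, natDegree_mul (pow_ne_zero _ (ne_zero_of_natDegree_gt (n := 0) hlin.symm.le))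
    fun h : T = 0 => hlead (by rw [h, coeff_zero]), natDegree_pow, hlin, hT]
  omega

theorem X_sub_C_pow_dvd_comp_C_mul_X {K : Type*} [Field K] {p : K[X]} {a b : K} {n : ℕ}
    (hb : b ≠ 0) (h : (X - C a) ^ n ∣ p) : (X - C (a / b)) ^ n ∣ p.comp (C b * X) := by
  have hlin : (X - C a).comp (C b * X) = C b * (X - C (a / b)) := by
    rw [sub_comp, X_comp, C_comp, mul_sub, ← C_mul, mul_div_cancel₀ _ hb]
  obtain ⟨q, rfl⟩ := h
  exact ⟨C b ^ n * q.comp (C b * X), by rw [mul_comp, pow_comp, hlin, mul_pow, ← C_pow]; ring⟩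

end Polynomial

theorem ensembleAvg_eq_eval_hermiteOneZero (n : ℕ) (β z : ℂ) :
    ensembleAvg n β z = (hermiteOneZero ℂ n).eval (z / β) := by
  rcases Nat.eq_zero_or_pos n with rfl | hn
  · simp [ensembleAvg, hermiteOneZero]
  rw [ensembleAvg, hermiteOneZero, eval_mul, eval_pow, eval_sub, eval_one, eval_X, eval_trunc,
    PowerSeries.invOneSubPow_val_eq_mk_sub_one_add_choose_of_pos _ _ hn]
  congr 1
  refine Finset.sum_congr rfl fun j _ => ?_
  rw [PowerSeries.coeff_mk, Nat.cast_choose ℂ (Nat.le_add_right _ j), Nat.add_sub_cancel_left,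
    show n - 1 + j = n + j - 1 by omega, mul_comm, mul_comm (j ! : ℂ)]

/-- `P̄_n` is the Hermite interpolation polynomial of degree `2n-1` with
`P̄_n(0) = 1`, `P̄_n(β) = 0` and vanishing derivatives of order `1,…,n-1` at `0` and `β`. -/
theorem ensembleAvg_hermite (n : ℕ) (hn : 1 ≤ n) (β : ℂ) (hβ : β ≠ 0)
    (P : Polynomial ℂ) (hP : ∀ z : ℂ, P.eval z = ensembleAvg n β z) :
    P.natDegree = 2 * n - 1 ∧ P.eval 0 = 1 ∧ P.eval β = 0 ∧
      ∀ j : ℕ, 1 ≤ j → j ≤ n - 1 →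
        (Polynomial.derivative^[j] P).eval 0 = 0 ∧
          (Polynomial.derivative^[j] P).eval β = 0 := by
  have hPeq : P = (hermiteOneZero ℂ n).comp (C β⁻¹ * X) :=
    Polynomial.funext fun z => by
      rw [hP, ensembleAvg_eq_eval_hermiteOneZero, eval_comp, eval_mul, eval_C, eval_X,
        div_eq_inv_mul]
  have hdvd₀ : (X - C 0) ^ n ∣ P - 1 := by
    have := X_sub_C_pow_dvd_comp_C_mul_X (p := hermiteOneZero ℂ n - 1) (a := 0) (inv_ne_zero hβ)
      (by rw [C_0, sub_zero]; exact X_pow_dvd_hermiteOneZero_sub_one n)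
    rwa [zero_div, sub_comp, one_comp, ← hPeq] at this
  have hdvdβ : (X - C β) ^ n ∣ P := by
    have := X_sub_C_pow_dvd_comp_C_mul_X (inv_ne_zero hβ) (X_sub_one_pow_dvd_hermiteOneZero n)
    rwa [one_div, inv_inv, ← hPeq] at this
  refine ⟨?_, ?_, eval_iterate_derivative_eq_zero_of_X_sub_C_pow_dvd (j := 0) hdvdβ hn, ?_⟩
  · rw [hPeq, natDegree_comp, natDegree_C_mul_X _ (inv_ne_zero hβ), natDegree_hermiteOneZero hn,
      mul_one]
  · simpa [sub_eq_zero] using eval_iterate_derivative_eq_zero_of_X_sub_C_pow_dvd (j := 0) hdvd₀ hn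
  · intro j hj₁ hjn
    refine ⟨?_, eval_iterate_derivative_eq_zero_of_X_sub_C_pow_dvd hdvdβ (by omega)⟩
    have := eval_iterate_derivative_eq_zero_of_X_sub_C_pow_dvd hdvd₀ (show j < n by omega)
    rwa [iterate_derivative_sub, iterate_derivative_one hj₁, sub_zero] at this
end

section
/- Let n ≥ 1 and let β ∈ ℂ with β ≠ 0, and define P̄_n(z) = (1 − z/β)^n · Σ_{j=0}^{n−1} (z/β)^j · (n+j−1)!/(j!(n−1)!). Then P̄_n(z) + P̄_n(β − z) = 1 for every z ∈ ℂ. -/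
open Finset

variable {R : Type*} [CommRing R]

def choosePowSum (m : ℕ) (x : R) : R :=
  ∑ j ∈ range (m + 1), ((m + j).choose j : R) * x ^ j

theorem one_sub_mul_sum_choose_succ (m N : ℕ) (x : R) :
    (1 - x) * ∑ j ∈ range (N + 1), ((m + 1 + j).choose j : R) * x ^ j =
      ∑ j ∈ range (N + 1), ((m + j).choose j : R) * x ^ j
        - ((m + 1 + N).choose N : R) * x ^ (N + 1) := by
  induction N with
  | zero => simp
  | succ N ih =>
    have pascal : ((m + 1 + (N + 1)).choose (N + 1) : R) =
        (m + 1 + N).choose N + (m + (N + 1)).choose (N + 1) := by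
      rw [show m + 1 + (N + 1) = m + 1 + N + 1 by omega, Nat.choose_succ_succ',
        show m + 1 + N = m + (N + 1) by omega]
      push_cast; ring
    rw [sum_range_succ _ (N + 1), mul_add, ih, sum_range_succ _ (N + 1), pascal]
    ring

theorem one_sub_mul_choosePowSum_succ (m : ℕ) (x : R) :
    (1 - x) * choosePowSum (m + 1) x =
      choosePowSum m x + ((2 * m + 1).choose (m + 1) : R) * x ^ (m + 1) * (1 - 2 * x) := by
  have central : (m + 1 + (m + 1)).choose (m + 1) = 2 * (2 * m + 1).choose (m + 1) := by
    rw [show m + 1 + (m + 1) = 2 * m + 1 + 1 by omega, Nat.choose_succ_succ',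
      Nat.choose_symm_half]
    ring
  rw [choosePowSum, one_sub_mul_sum_choose_succ, sum_range_succ, central, choosePowSum,
    show m + (m + 1) = 2 * m + 1 by omega]
  push_cast
  ring

theorem one_sub_pow_mul_choosePowSum_add_pow_mul (m : ℕ) (x : R) :
    (1 - x) ^ (m + 1) * choosePowSum m x + x ^ (m + 1) * choosePowSum m (1 - x) = 1 := by
  induction m with
  | zero => simp [choosePowSum]
  | succ m ih =>
    have step := one_sub_mul_choosePowSum_succ m x
    have step' := one_sub_mul_choosePowSum_succ m (1 - x)
    rw [sub_sub_cancel] at step'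
    linear_combination ih + (1 - x) ^ (m + 1) * step + x ^ (m + 1) * step'

theorem ensembleAvg_succ_eq (m : ℕ) (β z : ℂ) :
    ensembleAvg (m + 1) β z = (1 - z / β) ^ (m + 1) * choosePowSum m (z / β) := by
  rw [ensembleAvg, choosePowSum, Nat.add_sub_cancel]
  congr 1
  refine sum_congr rfl fun j _ => ?_
  rw [Nat.cast_choose ℂ (Nat.le_add_left j m), Nat.add_sub_cancel, add_right_comm,
    Nat.add_sub_cancel, mul_comm]

/-- Symmetry of the ensemble average polynomial: `P̄_n(z) + P̄_n(β - z) = 1`. -/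
theorem ensembleAvg_symmetry (n : ℕ) (hn : 1 ≤ n) (β : ℂ) (hβ : β ≠ 0) :
    ∀ z : ℂ, ensembleAvg n β z + ensembleAvg n β (β - z) = 1 := by
  intro z
  obtain ⟨m, rfl⟩ : ∃ m, n = m + 1 := ⟨n - 1, by omega⟩
  have reflect : (β - z) / β = 1 - z / β := by rw [sub_div, div_self hβ]
  rw [ensembleAvg_succ_eq, ensembleAvg_succ_eq, reflect, sub_sub_cancel]
  exact one_sub_pow_mul_choosePowSum_add_pow_mul m (z / β)
end

section
/- For every integer n ≥ 1 and every t ∈ ℂ, the following polynomial identity holds: (1 − t)^n · Σ_{j=0}^{n−1} t^j · C(n+j−1, j) = 1/2 + Σ_{k=0}^{n−1} C(2k, k) · (t(1−t))^k · (1/2 − t), where C(m, p) denotes the binomial coefficient m!/(p!(m−p)!). -/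
open Finset

lemma aux_rec (m : ℕ) (t : ℂ) :
    (1 - t) * ∑ j ∈ range (m+2), t^j * ((m+1+j).choose j : ℂ)
      = (∑ j ∈ range (m+1), t^j * ((m+j).choose j : ℂ))
        + t^(m+1) * ((2*m+1).choose (m+1) : ℂ)
        - t^(m+2) * ((2*(m+1)).choose (m+1) : ℂ) := by
  set A := ∑ j ∈ range (m+2), t^j * ((m+1+j).choose j : ℂ) with hAdef
  set S := ∑ j ∈ range (m+1), t^j * ((m+j).choose j : ℂ) with hSdef
  have hA : A = (∑ j ∈ range (m+1), t^(j+1) * ((m+1+(j+1)).choose (j+1) : ℂ)) + 1 := by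
    rw [hAdef, Finset.sum_range_succ' (fun j => t^j * ((m+1+j).choose j : ℂ))]
    simp
  have hsplit : (∑ j ∈ range (m+1), t^(j+1) * ((m+1+(j+1)).choose (j+1) : ℂ))
      = (∑ j ∈ range (m+1), t^(j+1) * ((m+1+j).choose j : ℂ))
        + (∑ j ∈ range (m+1), t^(j+1) * ((m+(j+1)).choose (j+1) : ℂ)) := by
    rw [← Finset.sum_add_distrib]
    apply Finset.sum_congr rfl
    intro j _
    have h1 : (m+1+(j+1)).choose (j+1) = (m+1+j).choose j + (m+1+j).choose (j+1) :=
      Nat.choose_succ_succ _ _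
    have h2 : m+1+j = m+(j+1) := by omega
    rw [h1, h2]
    push_cast
    ring
  have hA2 : A = (∑ j ∈ range (m+1), t^j * ((m+1+j).choose j : ℂ))
      + t^(m+1) * ((2*(m+1)).choose (m+1) : ℂ) := by
    rw [hAdef, Finset.sum_range_succ]
    have h3 : m+1+(m+1) = 2*(m+1) := by ring
    rw [h3]
  have hB : (∑ j ∈ range (m+1), t^(j+1) * ((m+1+j).choose j : ℂ))
      = t * (A - t^(m+1) * ((2*(m+1)).choose (m+1) : ℂ)) := by
    calc (∑ j ∈ range (m+1), t^(j+1) * ((m+1+j).choose j : ℂ))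
        = ∑ j ∈ range (m+1), t * (t^j * ((m+1+j).choose j : ℂ)) := by
          apply Finset.sum_congr rfl; intro j _; ring
      _ = t * ∑ j ∈ range (m+1), t^j * ((m+1+j).choose j : ℂ) := (Finset.mul_sum _ _ _).symm
      _ = t * (A - t^(m+1) * ((2*(m+1)).choose (m+1) : ℂ)) := by rw [hA2]; ring
  have hC : (∑ j ∈ range (m+1), t^(j+1) * ((m+(j+1)).choose (j+1) : ℂ))
      = S - 1 + t^(m+1) * ((2*m+1).choose (m+1) : ℂ) := by
    have h4 : ∑ j ∈ range (m+2), t^j * ((m+j).choose j : ℂ)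
        = (∑ j ∈ range (m+1), t^(j+1) * ((m+(j+1)).choose (j+1) : ℂ)) + 1 := by
      rw [Finset.sum_range_succ' (fun j => t^j * ((m+j).choose j : ℂ))]
      simp
    have h5 : ∑ j ∈ range (m+2), t^j * ((m+j).choose j : ℂ)
        = S + t^(m+1) * ((2*m+1).choose (m+1) : ℂ) := by
      rw [Finset.sum_range_succ]
      have h6 : m+(m+1) = 2*m+1 := by ring
      rw [h6, hSdef]
    rw [h4] at h5
    linear_combination h5
  have := hA
  rw [hsplit, hB, hC] at this
  linear_combination this

lemma central_binom_double (m : ℕ) :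
    (2*(m+1)).choose (m+1) = 2 * (2*m+1).choose (m+1) := by
  have h1 : (2*(m+1)).choose (m+1) = (2*m+1).choose m + (2*m+1).choose (m+1) := by
    have : 2*(m+1) = (2*m+1)+1 := by ring
    rw [this]
    exact Nat.choose_succ_succ _ _
  have h2 : (2*m+1).choose m = (2*m+1).choose (m+1) := by
    rw [← Nat.choose_symm (by omega : m ≤ 2*m+1)]
    congr 1
    omega
  omega

/-- The identity `(1-t)^n ∑_{j=0}^{n-1} t^j C(n+j-1,j)
  = 1/2 + ∑_{k=0}^{n-1} C(2k,k) (t(1-t))^k (1/2 - t)`. -/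
theorem ensemble_partial_sum_identity (n : ℕ) (hn : 1 ≤ n) (t : ℂ) :
    (1 - t) ^ n * ∑ j ∈ Finset.range n, t ^ j * (Nat.choose (n + j - 1) j : ℂ) =
    1 / 2 + ∑ k ∈ Finset.range n, (Nat.choose (2 * k) k : ℂ) * (t * (1 - t)) ^ k * (1 / 2 - t) := by
  induction n, hn using Nat.le_induction with
  | base => simp; ring
  | succ n hn ih =>
    obtain ⟨m, rfl⟩ : ∃ m, n = m + 1 := ⟨n - 1, by omega⟩
    have hL : ∑ j ∈ Finset.range (m+2), t ^ j * (Nat.choose (m+1+1 + j - 1) j : ℂ)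
        = ∑ j ∈ Finset.range (m+2), t ^ j * (Nat.choose (m+1+j) j : ℂ) := by
      apply Finset.sum_congr rfl; intro j _
      rw [show m+1+1+j-1 = m+1+j from by omega]
    have hL' : ∑ j ∈ Finset.range (m+1), t ^ j * (Nat.choose (m+1 + j - 1) j : ℂ)
        = ∑ j ∈ Finset.range (m+1), t ^ j * (Nat.choose (m+j) j : ℂ) := by
      apply Finset.sum_congr rfl; intro j _
      rw [show m+1+j-1 = m+j from by omega]
    rw [hL'] at ih
    have key := aux_rec m t
    have hc : ((2*(m+1)).choose (m+1) : ℂ) = 2 * ((2*m+1).choose (m+1) : ℂ) := by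
      exact_mod_cast central_binom_double m
    rw [show m+1+1 = m+2 from rfl, hL,
      Finset.sum_range_succ (fun k => (Nat.choose (2*k) k : ℂ) * (t*(1-t))^k * (1/2 - t)) (m+1),
      mul_pow t (1-t) (m+1)]
    have hstep : (1 - t)^(m+2) * ∑ j ∈ Finset.range (m+2), t ^ j * (Nat.choose (m+1+j) j : ℂ)
        = (1 - t)^(m+1) * ((∑ j ∈ Finset.range (m+1), t^j * ((m+j).choose j : ℂ))
            + t^(m+1) * ((2*m+1).choose (m+1) : ℂ)
            - t^(m+2) * ((2*(m+1)).choose (m+1) : ℂ)) := by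
      rw [← key, pow_succ]
      ring
    rw [hstep]
    linear_combination ih - (t^(m+1) * (1-t)^(m+1) / 2) * hc
end

section
/- Define f_n(t) = (1 − t)^n · Σ_{j=0}^{n−1} t^j · C(n+j−1, j) for integers n ≥ 1 and t ∈ ℂ. Then for every n ≥ 1 and every t ∈ ℂ, f_{n+1}(t) = f_n(t) − (1 − t)^n · t^n · C(2n, n) · (t − 1/2). -/
/-- `f_n(t) = (1-t)^n ∑_{j=0}^{n-1} t^j C(n+j-1,j)`, the ensemble average polynomial
after the substitution `t = z/β`. -/
noncomputable def fEns (n : ℕ) (t : ℂ) : ℂ :=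
  (1 - t) ^ n * ∑ j ∈ Finset.range n, t ^ j * (Nat.choose (n + j - 1) j : ℂ)

lemma central_double (m : ℕ) :
    ((2 * m + 2).choose (m + 1) : ℕ) = 2 * ((2 * m + 1).choose (m + 1)) := by
  have h1 : (2 * m + 2).choose (m + 1)
      = (2 * m + 1).choose m + (2 * m + 1).choose (m + 1) := by
    have := Nat.choose_succ_succ (2 * m + 1) m
    simpa using this
  have h2 : (2 * m + 1).choose m = (2 * m + 1).choose (m + 1) := by
    have := Nat.choose_symm (show m + 1 ≤ 2 * m + 1 by omega)
    have hm : 2 * m + 1 - (m + 1) = m := by omega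
    rw [hm] at this
    omega
  omega

lemma key (m : ℕ) (t : ℂ) :
    (1 - t) * ∑ j ∈ Finset.range (m + 2), t ^ j * ((m + 1 + j).choose j : ℂ)
      = (∑ j ∈ Finset.range (m + 1), t ^ j * ((m + j).choose j : ℂ))
        - t ^ (m + 1) * (((2 * m + 2).choose (m + 1)) : ℂ) * (t - 1 / 2) := by
  rw [sub_mul, one_mul, Finset.mul_sum]
  rw [Finset.sum_range_succ' (fun j => t ^ j * ((m + 1 + j).choose j : ℂ)) (m + 1)]
  rw [Finset.sum_range_succ (fun j => t * (t ^ j * ((m + 1 + j).choose j : ℂ))) (m + 1)]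
  rw [Finset.sum_range_succ' (fun j => t ^ j * ((m + j).choose j : ℂ)) m]
  have hL : (∑ j ∈ Finset.range (m + 1), t ^ (j + 1) * ((m + 1 + (j + 1)).choose (j + 1) : ℂ))
      - ∑ j ∈ Finset.range (m + 1), t * (t ^ j * ((m + 1 + j).choose j : ℂ))
      = ∑ j ∈ Finset.range (m + 1), t ^ (j + 1) * ((m + 1 + j).choose (j + 1) : ℂ) := by
    rw [← Finset.sum_sub_distrib]
    apply Finset.sum_congr rfl
    intro j _
    have hp : ((m + 1 + (j + 1)).choose (j + 1) : ℕ)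
        = (m + 1 + j).choose j + (m + 1 + j).choose (j + 1) := by
      rw [show m + 1 + (j + 1) = (m + 1 + j) + 1 from by omega]
      exact Nat.choose_succ_succ (m + 1 + j) j
    rw [hp]
    push_cast
    ring
  have hR : (∑ j ∈ Finset.range (m + 1), t ^ (j + 1) * ((m + 1 + j).choose (j + 1) : ℂ))
      = (∑ j ∈ Finset.range m, t ^ (j + 1) * ((m + (j + 1)).choose (j + 1) : ℂ))
        + t ^ (m + 1) * ((2 * m + 1).choose (m + 1) : ℂ) := by
    rw [Finset.sum_range_succ]
    congr 1
    · apply Finset.sum_congr rfl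
      intro j _
      rw [show m + 1 + j = m + (j + 1) from by omega]
    · rw [show m + 1 + m = 2 * m + 1 from by omega]
  have hc : (((2 * m + 2).choose (m + 1)) : ℂ) = 2 * ((2 * m + 1).choose (m + 1) : ℂ) := by
    exact_mod_cast congrArg (Nat.cast : ℕ → ℂ) (central_double m)
  have h2 : ((m + 1 + (m + 1)).choose (m + 1) : ℂ) = ((2 * m + 2).choose (m + 1) : ℂ) := by
    rw [show m + 1 + (m + 1) = 2 * m + 2 from by omega]
  -- assemble
  have expand : (∑ j ∈ Finset.range (m + 1), t ^ (j + 1) * ((m + 1 + (j + 1)).choose (j + 1) : ℂ))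
      + t ^ 0 * ((m + 1 + 0).choose 0 : ℂ)
      - ((∑ j ∈ Finset.range (m + 1), t * (t ^ j * ((m + 1 + j).choose j : ℂ)))
        + t * (t ^ (m + 1) * ((m + 1 + (m + 1)).choose (m + 1) : ℂ)))
      = ((∑ j ∈ Finset.range (m + 1), t ^ (j + 1) * ((m + 1 + (j + 1)).choose (j + 1) : ℂ))
          - ∑ j ∈ Finset.range (m + 1), t * (t ^ j * ((m + 1 + j).choose j : ℂ)))
        + 1 - t * (t ^ (m + 1) * ((m + 1 + (m + 1)).choose (m + 1) : ℂ)) := by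
    simp only [pow_zero, Nat.add_zero, Nat.choose_zero_right, Nat.cast_one, one_mul]
    ring
  rw [expand, hL, hR, h2, hc]
  have hz : ((m + 0).choose 0 : ℂ) = 1 := by norm_num
  rw [hz]
  ring

/-- The first order recurrence
`f_{n+1}(t) = f_n(t) - (1-t)^n t^n C(2n,n) (t - 1/2)`. -/
theorem fEns_recurrence (n : ℕ) (hn : 1 ≤ n) (t : ℂ) :
    fEns (n + 1) t =
      fEns n t - (1 - t) ^ n * t ^ n * (Nat.choose (2 * n) n : ℂ) * (t - 1 / 2) := by
  obtain ⟨m, rfl⟩ := Nat.exists_eq_add_of_le hn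
  unfold fEns
  have e1 : (∑ j ∈ Finset.range (1 + m + 1), t ^ j * ((1 + m + 1 + j - 1).choose j : ℂ))
      = ∑ j ∈ Finset.range (m + 2), t ^ j * ((m + 1 + j).choose j : ℂ) := by
    rw [show 1 + m + 1 = m + 2 from by omega]
    apply Finset.sum_congr rfl
    intro j _; rw [show m + 2 + j - 1 = m + 1 + j from by omega]
  have e2 : (∑ j ∈ Finset.range (1 + m), t ^ j * ((1 + m + j - 1).choose j : ℂ))
      = ∑ j ∈ Finset.range (m + 1), t ^ j * ((m + j).choose j : ℂ) := by
    rw [show 1 + m = m + 1 from by omega]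
    apply Finset.sum_congr rfl
    intro j _; rw [show m + 1 + j - 1 = m + j from by omega]
  have e3 : ((2 * (1 + m)).choose (1 + m) : ℂ) = ((2 * m + 2).choose (m + 1) : ℂ) := by
    rw [show 2 * (1 + m) = 2 * m + 2 from by omega, show 1 + m = m + 1 from by omega]
  rw [e1, e2, e3]
  have hpow : (1 - t) ^ (1 + m + 1) = (1 - t) ^ (1 + m) * (1 - t) := pow_succ _ _
  rw [hpow, mul_assoc, key m t]
  have h1m : (1 : ℕ) + m = m + 1 := by omega
  rw [h1m]
  ring
end

section
/- Define f_n(t) = (1 − t)^n · Σ_{j=0}^{n−1} t^j · C(n+j−1, j). Let t ∈ ℂ satisfy |t(1−t)| < 1/4. If Re(t) < 1/2 then f_n(t) → 1 as n → ∞, and if Re(t) > 1/2 then f_n(t) → 0 as n → ∞. (Note that |t(1−t)| < 1/4 excludes Re(t) = 1/2 except for no points at all: if Re(t) = 1/2 then |t(1−t)| ≥ 1/4.) -/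
open Filter Finset

/-!
Writing `u = t(1-t)`, Pascal's rule gives the telescoping recurrence
`f_{n+1}(t) = f_n(t) + C(2n-1,n) uⁿ (1-2t)`, whose increment is antisymmetric under `t ↦ 1-t`;
since `f_1(t) + f_1(1-t) = 1`, this gives `f_n(t) + f_n(1-t) = 1` for all `n ≥ 1`.
If `Re t > 1/2` then `|t| ≥ 1/2`, so bounding `C(n+j,j) ≤ 2^{n+j}` and `|t|^j ≤ 2^{n-j}|t|^n`
gives `|f_{n+1}(t)| ≤ (n+1)|1-t| (4|u|)ⁿ → 0`. The case `Re t < 1/2` follows by symmetry.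
-/

theorem Nat.choose_two_mul_add_two (m : ℕ) :
    (2 * m + 2).choose (m + 1) = 2 * (2 * m + 1).choose (m + 1) := by
  rw [Nat.choose_succ_succ', ← Nat.choose_symm_half]
  ring

/-- The sum in `fEns`, reindexed by `m = n - 1` to get rid of the truncated subtraction. -/
noncomputable def ensSum (m k : ℕ) (t : ℂ) : ℂ :=
  ∑ j ∈ range k, t ^ j * ((m + j).choose j : ℂ)

theorem fEns_succ (m : ℕ) (t : ℂ) : fEns (m + 1) t = (1 - t) ^ (m + 1) * ensSum m (m + 1) t := by
  simp only [fEns, ensSum, Nat.add_right_comm m 1, Nat.add_sub_cancel]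

theorem ensSum_succ_right (m k : ℕ) (t : ℂ) :
    ensSum m (k + 1) t = ensSum m k t + t ^ k * ((m + k).choose k : ℂ) :=
  sum_range_succ _ _

theorem ensSum_succ_succ (m k : ℕ) (t : ℂ) :
    ensSum (m + 1) (k + 1) t = ensSum m (k + 1) t + t * ensSum (m + 1) k t := by
  have pascal : ∀ j, ((m + 1 + (j + 1)).choose (j + 1) : ℂ)
      = ((m + (j + 1)).choose (j + 1) : ℂ) + ((m + 1 + j).choose j : ℂ) := fun j => by
    rw [show m + 1 + (j + 1) = (m + 1 + j) + 1 by ring, Nat.choose_succ_succ',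
      show m + 1 + j = m + (j + 1) by ring]
    push_cast; ring
  simp only [ensSum, sum_range_succ' (fun j => t ^ j * ((m + 1 + j).choose j : ℂ)) k,
    sum_range_succ' (fun j => t ^ j * ((m + j).choose j : ℂ)) k, pascal, mul_add, sum_add_distrib,
    mul_sum, add_zero, Nat.choose_zero_right, add_right_comm _ (t ^ 0 * _)]
  congr 2
  exact sum_congr rfl fun j _ => by ring

theorem one_sub_mul_ensSum_succ (m : ℕ) (t : ℂ) :
    (1 - t) * ensSum (m + 1) (m + 2) t
      = ensSum m (m + 1) t + ((2 * m + 1).choose (m + 1) : ℂ) * t ^ (m + 1) * (1 - 2 * t) := by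
  have hpascal := ensSum_succ_succ m (m + 1) t
  have hlast := ensSum_succ_right (m + 1) (m + 1) t
  rw [ensSum_succ_right m (m + 1), show m + (m + 1) = 2 * m + 1 by ring] at hpascal
  rw [show m + 1 + (m + 1) = 2 * m + 2 by ring, Nat.choose_two_mul_add_two] at hlast
  push_cast at hlast
  linear_combination hpascal - t * hlast

theorem fEns_succ_succ (m : ℕ) (t : ℂ) :
    fEns (m + 2) t = fEns (m + 1) t
      + ((2 * m + 1).choose (m + 1) : ℂ) * (t * (1 - t)) ^ (m + 1) * (1 - 2 * t) := by
  rw [fEns_succ, fEns_succ, pow_succ, mul_assoc, one_sub_mul_ensSum_succ, mul_pow]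
  ring

theorem fEns_add_fEns_one_sub {n : ℕ} (hn : 1 ≤ n) (t : ℂ) : fEns n t + fEns n (1 - t) = 1 := by
  induction n, hn using Nat.le_induction with
  | base => simp [fEns]
  | succ n hn ih =>
    obtain ⟨m, rfl⟩ := Nat.exists_eq_add_of_le' hn
    rw [fEns_succ_succ, fEns_succ_succ, sub_sub_cancel]
    linear_combination ih

theorem norm_ensSum_le {t : ℂ} (ht : 1 / 2 ≤ ‖t‖) (n : ℕ) :
    ‖ensSum n (n + 1) t‖ ≤ (n + 1) * (4 * ‖t‖) ^ n := by
  have hterm : ∀ j ∈ range (n + 1), ‖t ^ j * ((n + j).choose j : ℂ)‖ ≤ (4 * ‖t‖) ^ n := by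
    intro j hj
    rw [norm_mul, norm_pow, Complex.norm_natCast]
    calc ‖t‖ ^ j * ((n + j).choose j : ℝ) ≤ ‖t‖ ^ j * 2 ^ (n + j) := by
          gcongr; exact_mod_cast Nat.choose_le_two_pow _ _
      _ = 2 ^ n * (2 * ‖t‖) ^ j := by ring
      _ ≤ 2 ^ n * (2 * ‖t‖) ^ n := by
          gcongr
          · linarith
          · exact Nat.lt_succ_iff.mp (mem_range.mp hj)
      _ = (4 * ‖t‖) ^ n := by rw [← mul_pow, ← mul_assoc]; norm_num
  calc ‖ensSum n (n + 1) t‖ ≤ ∑ _j ∈ range (n + 1), (4 * ‖t‖) ^ n := norm_sum_le_of_le _ hterm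
    _ = (n + 1) * (4 * ‖t‖) ^ n := by simp

theorem norm_fEns_succ_le {t : ℂ} (ht : 1 / 2 ≤ ‖t‖) (n : ℕ) :
    ‖fEns (n + 1) t‖ ≤ (n + 1) * ‖1 - t‖ * (4 * ‖t * (1 - t)‖) ^ n :=
  calc ‖fEns (n + 1) t‖ = ‖1 - t‖ ^ (n + 1) * ‖ensSum n (n + 1) t‖ := by
        rw [fEns_succ, norm_mul, norm_pow]
    _ ≤ ‖1 - t‖ ^ (n + 1) * ((n + 1) * (4 * ‖t‖) ^ n) := by gcongr; exact norm_ensSum_le ht n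
    _ = (n + 1) * ‖1 - t‖ * (4 * ‖t * (1 - t)‖) ^ n := by rw [norm_mul]; ring

theorem tendsto_fEns_zero {t : ℂ} (ht : ‖t * (1 - t)‖ < 1 / 4) (hre : 1 / 2 < t.re) :
    Tendsto (fun n => fEns n t) atTop (nhds 0) := by
  set r := 4 * ‖t * (1 - t)‖
  have hr0 : 0 ≤ r := by positivity
  have hr1 : r < 1 := by linarith
  have hbound : Tendsto (fun n : ℕ => (n + 1) * ‖1 - t‖ * r ^ n) atTop (nhds 0) := by
    have h := ((tendsto_self_mul_const_pow_of_lt_one hr0 hr1).add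
      (tendsto_pow_atTop_nhds_zero_of_lt_one hr0 hr1)).mul_const ‖1 - t‖
    rw [zero_add, zero_mul] at h
    exact h.congr fun n => by ring
  rw [← tendsto_add_atTop_iff_nat 1]
  exact squeeze_zero_norm (norm_fEns_succ_le ((Complex.re_le_norm t).trans' hre.le)) hbound

/-- In the convergence region `|t(1-t)| < 1/4`, `f_n(t) → 1` when `Re t < 1/2` and
`f_n(t) → 0` when `Re t > 1/2`. -/
theorem fEns_pointwise_limit (t : ℂ) (ht : ‖t * (1 - t)‖ < 1 / 4) :
    (t.re < 1 / 2 → Tendsto (fun n : ℕ => fEns n t) atTop (nhds 1)) ∧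
    (1 / 2 < t.re → Tendsto (fun n : ℕ => fEns n t) atTop (nhds 0)) := by
  refine ⟨fun hre => ?_, tendsto_fEns_zero ht⟩
  have hdecay : Tendsto (fun n => fEns n (1 - t)) atTop (nhds 0) :=
    tendsto_fEns_zero (by rwa [sub_sub_cancel, mul_comm]) (by rw [Complex.sub_re, Complex.one_re]; linarith)
  have hsymm : ∀ᶠ n in atTop, 1 - fEns n (1 - t) = fEns n t := by
    filter_upwards [eventually_ge_atTop 1] with n hn
    exact eq_sub_of_add_eq (fEns_add_fEns_one_sub hn t) |>.symm
  simpa using (tendsto_const_nhds.sub hdecay).congr' hsymm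
end

section
/- Let β > 0 and let l be a real number with 0 < 2l < β. Then −l ∈ D_β if and only if the closed disk {z ∈ ℂ : |z| ≤ l} is contained in D_β ∩ {z ∈ ℂ : 2 Re(z) < β}, where D_β = {z ∈ ℂ : |z² − βz| < β²/4}. -/
/-!
On the disk `‖z‖ ≤ l` the triangle inequality gives `‖z² - βz‖ ≤ ‖z‖² + β‖z‖ ≤ l² + βl`, and the
bound is attained at `z = -l`, where `z²` and `-βz` are both positive reals. So `|z² - βz|` is
maximal on the disk at `-l`; moreover `2 Re z ≤ 2l < β` holds on the whole disk.
-/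

namespace Complex

lemma norm_sq_sub_ofReal_mul_le {b : ℝ} (hb : 0 ≤ b) (z : ℂ) :
    ‖z ^ 2 - (b : ℂ) * z‖ ≤ ‖z‖ ^ 2 + b * ‖z‖ :=
  calc ‖z ^ 2 - (b : ℂ) * z‖ ≤ ‖z ^ 2‖ + ‖(b : ℂ) * z‖ := norm_sub_le _ _
    _ = ‖z‖ ^ 2 + b * ‖z‖ := by rw [norm_pow, norm_mul, norm_real, Real.norm_of_nonneg hb]

lemma norm_neg_ofReal_sq_sub_ofReal_mul {b l : ℝ} (hb : 0 ≤ b) (hl : 0 ≤ l) :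
    ‖(-l : ℂ) ^ 2 - (b : ℂ) * (-l)‖ = l ^ 2 + b * l := by
  have h : (-l : ℂ) ^ 2 - (b : ℂ) * (-l) = ((l ^ 2 + b * l : ℝ) : ℂ) := by push_cast; ring
  rw [h, norm_real, Real.norm_of_nonneg (by positivity)]

lemma norm_sq_sub_ofReal_mul_le_of_norm_le {b l : ℝ} (hb : 0 ≤ b) {z : ℂ} (hz : ‖z‖ ≤ l) :
    ‖z ^ 2 - (b : ℂ) * z‖ ≤ ‖(-l : ℂ) ^ 2 - (b : ℂ) * (-l)‖ := by
  have hl : 0 ≤ l := (norm_nonneg z).trans hz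
  rw [norm_neg_ofReal_sq_sub_ofReal_mul hb hl]
  calc ‖z ^ 2 - (b : ℂ) * z‖ ≤ ‖z‖ ^ 2 + b * ‖z‖ := norm_sq_sub_ofReal_mul_le hb z
    _ ≤ l ^ 2 + b * l := by gcongr

end Complex

theorem disk_inclusion_left_lobe_general (β l : ℝ) (hl : 0 < l) (h2l : 2 * l < β) :
    ((-l : ℂ) ∈ {z : ℂ | ‖z ^ 2 - (β : ℂ) * z‖ < β ^ 2 / 4}) ↔
      Metric.closedBall (0 : ℂ) l ⊆
        {z : ℂ | ‖z ^ 2 - (β : ℂ) * z‖ < β ^ 2 / 4} ∩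
          {z : ℂ | 2 * z.re < β} := by
  constructor
  · intro h z hz
    rw [mem_closedBall_zero_iff] at hz
    have hβ : 0 ≤ β := by linarith
    refine ⟨(Complex.norm_sq_sub_ofReal_mul_le_of_norm_le hβ hz).trans_lt h, ?_⟩
    show 2 * z.re < β
    linarith [Complex.re_le_norm z]
  · intro h
    exact (h (by simp [abs_of_pos hl])).1

/-- For `0 < 2l < β`, the point `-l` lies in `D_β = {|z² - βz| < β²/4}` if and only if the
closed disk of center `0` and radius `l` is contained in the left lobe
`D_β ∩ {2 Re z < β}`. -/
theorem disk_inclusion_left_lobe (β l : ℝ) (hβ : 0 < β) (hl : 0 < l) (h2l : 2 * l < β) :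
    ((-l : ℂ) ∈ {z : ℂ | ‖z ^ 2 - (β : ℂ) * z‖ < β ^ 2 / 4}) ↔
      Metric.closedBall (0 : ℂ) l ⊆
        {z : ℂ | ‖z ^ 2 - (β : ℂ) * z‖ < β ^ 2 / 4} ∩
          {z : ℂ | 2 * z.re < β} :=
  disk_inclusion_left_lobe_general β l hl h2l
end

section
/- Let β > 0 and let q be a real number with 0 < 2q < β. Then β + q ∈ D_β if and only if the closed disk {z ∈ ℂ : |z − β| ≤ q} is contained in D_β ∩ {z ∈ ℂ : 2 Re(z) > β}, where D_β = {z ∈ ℂ : |z² − βz| < β²/4}. Moreover β + q ∈ D_β if and only if −q ∈ D_β. -/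
/-!
Since `z² - βz = z (z - β)`, on the disk `|z - β| ≤ q` the modulus `|z² - βz|` is at most
`(β + q) q`, a bound attained at `z = β + q`; and `2 Re z ≥ 2(β - q) > β` there.
The reflection `z ↦ β - z` leaves `z² - βz` unchanged and maps `β + q` to `-q`.
-/

open Metric

def lemniscateInterior (β : ℝ) : Set ℂ := {z : ℂ | ‖z ^ 2 - (β : ℂ) * z‖ < β ^ 2 / 4}

lemma norm_sq_sub_mul (c z : ℂ) : ‖z ^ 2 - c * z‖ = ‖z‖ * ‖z - c‖ := by
  rw [← norm_mul]
  ring_nf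

lemma norm_sq_sub_mul_le_of_mem_closedBall {c z : ℂ} {q : ℝ} (hz : z ∈ closedBall c q) :
    ‖z ^ 2 - c * z‖ ≤ (‖c‖ + q) * q := by
  rw [mem_closedBall, dist_eq_norm] at hz
  have hz_norm : ‖z‖ ≤ ‖c‖ + q :=
    calc ‖z‖ = ‖c + (z - c)‖ := by rw [add_sub_cancel]
      _ ≤ ‖c‖ + ‖z - c‖ := norm_add_le _ _
      _ ≤ ‖c‖ + q := by gcongr
  rw [norm_sq_sub_mul]
  exact mul_le_mul hz_norm hz (norm_nonneg _) ((norm_nonneg z).trans hz_norm)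

lemma norm_sq_sub_mul_ofReal_add {β q : ℝ} (hβ : 0 ≤ β) (hq : 0 ≤ q) :
    ‖((β : ℂ) + q) ^ 2 - β * (β + q)‖ = (β + q) * q := by
  rw [norm_sq_sub_mul, add_sub_cancel_left, ← Complex.ofReal_add, Complex.norm_real,
    Complex.norm_real, Real.norm_of_nonneg (by linarith), Real.norm_of_nonneg hq]

lemma lt_two_mul_re_of_mem_closedBall {β q : ℝ} {z : ℂ} (hz : z ∈ closedBall (β : ℂ) q)
    (h2q : 2 * q < β) : β < 2 * z.re := by
  rw [mem_closedBall, dist_eq_norm] at hz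
  have hre : |z.re - β| ≤ q := by
    simpa using (Complex.abs_re_le_norm (z - β)).trans hz
  linarith [(abs_le.mp hre).1]

lemma reflect_mem_lemniscateInterior_iff {β : ℝ} {z : ℂ} :
    (β : ℂ) - z ∈ lemniscateInterior β ↔ z ∈ lemniscateInterior β := by
  have hinvariant : ((β : ℂ) - z) ^ 2 - β * (β - z) = z ^ 2 - β * z := by ring
  simp only [lemniscateInterior, Set.mem_ofPred_eq, hinvariant]

theorem disk_inclusion_right_lobe_general (β q : ℝ) (hq : 0 < q) (h2q : 2 * q < β) :
    (((β : ℂ) + q ∈ {z : ℂ | ‖z ^ 2 - (β : ℂ) * z‖ < β ^ 2 / 4}) ↔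
      Metric.closedBall (β : ℂ) q ⊆
        {z : ℂ | ‖z ^ 2 - (β : ℂ) * z‖ < β ^ 2 / 4} ∩
          {z : ℂ | (β : ℝ) < 2 * z.re}) ∧
    (((β : ℂ) + q ∈ {z : ℂ | ‖z ^ 2 - (β : ℂ) * z‖ < β ^ 2 / 4}) ↔
      (-q : ℂ) ∈ {z : ℂ | ‖z ^ 2 - (β : ℂ) * z‖ < β ^ 2 / 4}) := by
  have hβ : 0 ≤ β := by linarith
  have hedge : (β : ℂ) + q ∈ closedBall (β : ℂ) q := by
    simp [mem_closedBall, dist_eq_norm, abs_of_pos hq]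
  refine ⟨⟨fun h z hz => ⟨?_, lt_two_mul_re_of_mem_closedBall hz h2q⟩,
    fun h => (h hedge).1⟩, ?_⟩
  · have hbound := norm_sq_sub_mul_le_of_mem_closedBall hz
    rw [Complex.norm_real, Real.norm_of_nonneg hβ,
      ← norm_sq_sub_mul_ofReal_add hβ hq.le] at hbound
    exact hbound.trans_lt h
  · have hreflect : (β : ℂ) - (β + q) = -q := by ring
    rw [← hreflect]
    exact reflect_mem_lemniscateInterior_iff.symm

/-- For `0 < 2q < β`, the point `β + q` lies in `D_β = {|z² - βz| < β²/4}` if and only if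
the closed disk of center `β` and radius `q` is contained in the right lobe
`D_β ∩ {2 Re z > β}`; moreover `β + q ∈ D_β` iff `-q ∈ D_β`. -/
theorem disk_inclusion_right_lobe (β q : ℝ) (hβ : 0 < β) (hq : 0 < q) (h2q : 2 * q < β) :
    (((β : ℂ) + q ∈ {z : ℂ | ‖z ^ 2 - (β : ℂ) * z‖ < β ^ 2 / 4}) ↔
      Metric.closedBall (β : ℂ) q ⊆
        {z : ℂ | ‖z ^ 2 - (β : ℂ) * z‖ < β ^ 2 / 4} ∩
          {z : ℂ | (β : ℝ) < 2 * z.re}) ∧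
    (((β : ℂ) + q ∈ {z : ℂ | ‖z ^ 2 - (β : ℂ) * z‖ < β ^ 2 / 4}) ↔
      (-q : ℂ) ∈ {z : ℂ | ‖z ^ 2 - (β : ℂ) * z‖ < β ^ 2 / 4}) :=
  disk_inclusion_right_lobe_general β q hq h2q
end

section
/- For every β > 0, the set D_β ∩ {z ∈ ℂ : Re(z) < β/2} is convex, where D_β = {z ∈ ℂ : |z² − βz| < β²/4}. -/
/-!
Centre the lemniscate at the origin: with `a = β / 2` the left lobe becomes
`{w | ‖w² - a²‖ < a², Re w < 0}`, i.e. `|w|⁴ < 2a² Re(w²)` with `Re w < 0`.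
This lobe is the intersection of the open quarter-plane cone `|Im w| < -Re w` with the open
discs `‖w - c‖ < ‖c‖` through the origin centred on the left branch `2 Re(c²) = a², Re c < 0`
of a rectangular hyperbola (the lobe is the inversion of the convex region beyond that branch,
and these discs are the inversions of its tangent half-planes), hence convex. Both inclusions
rest on the identity `Re(c w̄)² = Re(c²) Re(w²) + Im(c w)²`; for the reverse one the disc
centred at the branch point on the ray through `w̄` is the binding constraint.
-/

open Complex ComplexConjugate Metric Set

def leftLobe (a : ℝ) : Set ℂ := {w | ‖w ^ 2 - (a : ℂ) ^ 2‖ < a ^ 2 ∧ w.re < 0}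

def leftHyperbolaBranch (a : ℝ) : Set ℂ := {c | c.re < 0 ∧ 2 * (c ^ 2).re = a ^ 2}

lemma re_sq (z : ℂ) : (z ^ 2).re = z.re ^ 2 - z.im ^ 2 := by
  simp only [sq, mul_re]

lemma re_mul_conj_sq (c w : ℂ) :
    (c * conj w).re ^ 2 = (c ^ 2).re * (w ^ 2).re + (c * w).im ^ 2 := by
  simp only [sq, mul_re, mul_im, conj_re, conj_im]
  ring

lemma mem_ball_self_norm_iff (c w : ℂ) : w ∈ ball c ‖c‖ ↔ ‖w‖ ^ 2 < 2 * (c * conj w).re := by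
  rw [mem_ball, dist_eq, ← sq_lt_sq₀ (norm_nonneg _) (norm_nonneg _)]
  simp only [Complex.sq_norm, normSq_sub, mul_re, conj_re, conj_im]
  constructor <;> intro h <;> linarith

lemma abs_im_lt_neg_re_iff (w : ℂ) : |w.im| < -w.re ↔ 0 < (w ^ 2).re ∧ w.re < 0 := by
  rw [re_sq, sub_pos, sq_lt_sq]
  constructor
  · intro h
    have hw₀ : w.re < 0 := by linarith [abs_nonneg w.im]
    exact ⟨by rwa [abs_of_neg hw₀], hw₀⟩
  · rintro ⟨h, hw₀⟩
    rwa [abs_of_neg hw₀] at h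

lemma convex_abs_im_lt_neg_re : Convex ℝ {w : ℂ | |w.im| < -w.re} := by
  have h₁ : Convex ℝ {w : ℂ | w.im + w.re < 0} :=
    convex_halfSpace_lt ⟨fun x y => by simp only [add_im, add_re]; ring,
      fun c x => by simp only [smul_im, smul_re, smul_eq_mul]; ring⟩ 0
  have h₂ : Convex ℝ {w : ℂ | -w.im + w.re < 0} :=
    convex_halfSpace_lt ⟨fun x y => by simp only [add_im, add_re]; ring,
      fun c x => by simp only [smul_im, smul_re, smul_eq_mul]; ring⟩ 0
  convert h₁.inter h₂ using 1
  ext w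
  simp only [mem_ofPred_eq, mem_inter_iff, abs_lt]
  constructor <;> rintro ⟨h, h'⟩ <;> constructor <;> linarith

lemma mem_leftLobe_iff {a : ℝ} {w : ℂ} :
    w ∈ leftLobe a ↔ ‖w‖ ^ 4 < 2 * a ^ 2 * (w ^ 2).re ∧ w.re < 0 := by
  rw [leftLobe, mem_ofPred_eq, ← sq_lt_sq₀ (norm_nonneg _) (sq_nonneg a),
    show ‖w‖ ^ 4 = (‖w‖ ^ 2) ^ 2 by ring, Complex.sq_norm, Complex.sq_norm]
  simp only [normSq_apply, sq, sub_re, sub_im, mul_re, mul_im, ofReal_re, ofReal_im]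
  constructor <;> rintro ⟨h, hw₀⟩ <;> exact ⟨by nlinarith, hw₀⟩

lemma abs_im_lt_neg_re_of_mem_leftLobe {a : ℝ} {w : ℂ} (hw : w ∈ leftLobe a) :
    |w.im| < -w.re := by
  obtain ⟨hw₄, hw₀⟩ := mem_leftLobe_iff.1 hw
  have hw₂ : 0 < (w ^ 2).re :=
    pos_of_mul_pos_right (by nlinarith [pow_nonneg (norm_nonneg w) 4]) (sq_nonneg a)
  exact (abs_im_lt_neg_re_iff w).2 ⟨hw₂, hw₀⟩

lemma leftLobe_subset_ball {a : ℝ} {c : ℂ} (hc : c ∈ leftHyperbolaBranch a) :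
    leftLobe a ⊆ ball c ‖c‖ := by
  intro w hw
  obtain ⟨hw₄, hw₀⟩ := mem_leftLobe_iff.1 hw
  obtain ⟨hc₀, hc₂⟩ := hc
  have haw : 0 < a ^ 2 * (w ^ 2).re := by nlinarith [pow_nonneg (norm_nonneg w) 4]
  have hw₂ : 0 < (w ^ 2).re := pos_of_mul_pos_right haw (sq_nonneg a)
  have ha : 0 < a ^ 2 := pos_of_mul_pos_left haw hw₂.le
  rw [re_sq] at hw₂
  have hc₂' : c.im ^ 2 < c.re ^ 2 := by linarith [re_sq c]
  have hpos : 0 < (c * conj w).re := by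
    have hprod : (c.im * w.im) ^ 2 < (c.re * w.re) ^ 2 := by
      rw [mul_pow, mul_pow]
      exact mul_lt_mul'' hc₂' (sub_pos.1 hw₂) (sq_nonneg _) (sq_nonneg _)
    have := abs_lt_of_sq_lt_sq' hprod (mul_pos_of_neg_of_neg hc₀ hw₀).le
    simp only [mul_re, conj_re, conj_im]
    linarith
  rw [mem_ball_self_norm_iff]
  refine lt_of_pow_lt_pow_left₀ 2 (by positivity) ?_
  calc (‖w‖ ^ 2) ^ 2 < 2 * a ^ 2 * (w ^ 2).re := by rw [← pow_mul]; exact hw₄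
    _ = 4 * (c ^ 2).re * (w ^ 2).re := by rw [← hc₂]; ring
    _ ≤ (2 * (c * conj w).re) ^ 2 := by nlinarith [re_mul_conj_sq c w, sq_nonneg (c * w).im]

lemma mem_leftLobe_of_forall_mem_ball {a : ℝ} (ha : 0 < a) {w : ℂ} (hw : |w.im| < -w.re)
    (hball : ∀ c ∈ leftHyperbolaBranch a, w ∈ ball c ‖c‖) : w ∈ leftLobe a := by
  obtain ⟨hw₂, hw₀⟩ := (abs_im_lt_neg_re_iff w).1 hw
  set r := √(2 * (w ^ 2).re)
  have hr₀ : 0 < r := Real.sqrt_pos.2 (by positivity)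
  have hr₂ : r ^ 2 = 2 * (w ^ 2).re := Real.sq_sqrt (by positivity)
  have hc : ((a / r : ℝ) : ℂ) * conj w ∈ leftHyperbolaBranch a := by
    refine ⟨?_, ?_⟩
    · simpa [re_ofReal_mul] using mul_neg_of_pos_of_neg (div_pos ha hr₀) hw₀
    · rw [mul_pow, ← map_pow, ← ofReal_pow, re_ofReal_mul, conj_re, div_pow, hr₂]
      field_simp
  have hnorm := (mem_ball_self_norm_iff _ _).1 (hball _ hc)
  rw [mul_assoc, re_ofReal_mul, ← map_mul, conj_re, ← sq] at hnorm
  refine mem_leftLobe_iff.2 ⟨?_, hw₀⟩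
  calc ‖w‖ ^ 4 = (‖w‖ ^ 2) ^ 2 := by ring
    _ < (2 * (a / r * (w ^ 2).re)) ^ 2 := by gcongr
    _ = 2 * a ^ 2 * (w ^ 2).re := by rw [mul_pow, mul_pow, div_pow, hr₂]; field_simp

theorem leftLobe_eq_inter_balls {a : ℝ} (ha : 0 < a) :
    leftLobe a = {w | |w.im| < -w.re} ∩ ⋂ c ∈ leftHyperbolaBranch a, ball c ‖c‖ :=
  Subset.antisymm
    (fun _ hw => ⟨abs_im_lt_neg_re_of_mem_leftLobe hw,
      mem_iInter₂.2 fun _ hc => leftLobe_subset_ball hc hw⟩)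
    (fun _ ⟨hw, hball⟩ => mem_leftLobe_of_forall_mem_ball ha hw (mem_iInter₂.1 hball))

theorem convex_leftLobe {a : ℝ} (ha : 0 < a) : Convex ℝ (leftLobe a) := by
  rw [leftLobe_eq_inter_balls ha]
  exact convex_abs_im_lt_neg_re.inter (convex_iInter₂ fun c _ => convex_ball c ‖c‖)

/-- The left lobe `D_β ∩ {Re z < β/2}` of the lemniscate region
`D_β = {|z² - βz| < β²/4}` is convex. -/
theorem left_lobe_convex (β : ℝ) (hβ : 0 < β) :
    Convex ℝ ({z : ℂ | ‖z ^ 2 - (β : ℂ) * z‖ < β ^ 2 / 4} ∩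
      {z : ℂ | z.re < β / 2}) := by
  have hshift : {z : ℂ | ‖z ^ 2 - (β : ℂ) * z‖ < β ^ 2 / 4} ∩ {z : ℂ | z.re < β / 2} =
      (· + -((β / 2 : ℝ) : ℂ)) ⁻¹' leftLobe (β / 2) := by
    ext z
    have hsq : (z + -((β / 2 : ℝ) : ℂ)) ^ 2 - ((β / 2 : ℝ) : ℂ) ^ 2 = z ^ 2 - β * z := by
      push_cast
      ring
    simp only [leftLobe, mem_inter_iff, mem_preimage, mem_ofPred_eq, hsq, add_re, neg_re,
      ofReal_re, add_neg_lt_iff_lt_add, zero_add, div_pow]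
    norm_num
  rw [hshift]
  exact (convex_leftLobe (half_pos hβ)).translate_preimage_left _
end

section
/- Let β > 0, and let r and α be positive real numbers with r < β/(2√2 + 2) and α < β/(2√2 + 2). Define the ensemble average polynomial P̄_n(z) = (1 − z/β)^n Σ_{j=0}^{n−1} (z/β)^j (n+j−1)!/(j!(n−1)!). Then for every ε > 0 there exists N such that for all n ≥ N: |1 − P̄_n(z)| < ε for every z with |z| ≤ r, and |P̄_n(z)| < ε for every z with |z − β| ≤ α. -/
/-!
Write `w = z / β`. Then `P̄_n(z) = (1 - w)^n S_n(w)`, where `S_n` is the `n`-th partial sum of the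
binomial series `∑ C(j+n-1, n-1) w^j = (1 - w)^{-n}`. Hence `1 - P̄_n(z)` is `(1 - w)^n` times the
tail of that series, while `P̄_n(z)` is `(1 - w)^n` times a sum of `n` terms of size at most
`4^n (1 + |w - 1|)^n`. Bounding binomial coefficients by `C(m, k) ≤ 2^m`, both are `O(n q^n)`
with `q = 4t(1 + t)`, where `t` bounds `|w|` on the first disk and `|1 - w|` on the second,
and `q < 1` exactly when `2t + 1 < √2`, i.e. `t < 1/(2√2 + 2)`.
-/

open Finset Filter Topology

section NegBinomial

variable {𝕜 : Type*} [NormedField 𝕜]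

def negBinomialPartialSum (n : ℕ) (w : 𝕜) : 𝕜 :=
  ∑ j ∈ range n, ((j + (n - 1)).choose (n - 1) : 𝕜) * w ^ j

lemma norm_choose_mul_pow_le (m k j : ℕ) {w : 𝕜} {t : ℝ} (hw : ‖w‖ ≤ t) :
    ‖(m.choose k : 𝕜) * w ^ j‖ ≤ 2 ^ m * t ^ j := by
  rw [norm_mul, norm_pow]
  gcongr
  exact (Nat.norm_cast_le _).trans <| by
    rw [norm_one, mul_one]; exact_mod_cast Nat.choose_le_two_pow m k

lemma norm_negBinomialPartialSum_le (n : ℕ) {w : 𝕜} {R : ℝ} (hR : 1 ≤ R) (hw : ‖w‖ ≤ R) :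
    ‖negBinomialPartialSum n w‖ ≤ n * (4 * R) ^ n := by
  have hterm : ∀ j ∈ range n, ‖((j + (n - 1)).choose (n - 1) : 𝕜) * w ^ j‖ ≤ (4 * R) ^ n := by
    intro j hj
    have hjn := mem_range.1 hj
    calc _ ≤ (2 : ℝ) ^ (j + (n - 1)) * R ^ j := norm_choose_mul_pow_le _ _ _ hw
      _ ≤ 2 ^ (2 * n) * R ^ n := by gcongr <;> first | omega | norm_num
      _ = (4 * R) ^ n := by rw [pow_mul, mul_pow]; norm_num
  simpa [negBinomialPartialSum] using norm_sum_le_of_le _ hterm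

lemma one_sub_mul_negBinomialPartialSum {n : ℕ} (hn : n ≠ 0) {w : 𝕜} (hw : ‖w‖ < 1) :
    1 - (1 - w) ^ n * negBinomialPartialSum n w =
      (1 - w) ^ n * ∑' i, ((i + n + (n - 1)).choose (n - 1) : 𝕜) * w ^ (i + n) := by
  have hseries := hasSum_choose_mul_geometric_of_norm_lt_one (n - 1) hw
  rw [Nat.sub_add_cancel (Nat.one_le_iff_ne_zero.2 hn)] at hseries
  have h1w : (1 - w) ^ n ≠ 0 := pow_ne_zero _ (sub_ne_zero.2 fun h => by simp [← h] at hw)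
  have hsplit := hseries.summable.sum_add_tsum_nat_add n
  rw [hseries.tsum_eq] at hsplit
  rw [negBinomialPartialSum, eq_sub_of_add_eq hsplit]
  field_simp
  ring

lemma norm_tsum_choose_mul_pow_add_le (n : ℕ) {w : 𝕜} {t : ℝ} (hw : ‖w‖ ≤ t) (ht : 2 * t < 1) :
    ‖∑' i, ((i + n + (n - 1)).choose (n - 1) : 𝕜) * w ^ (i + n)‖ ≤ (4 * t) ^ n / (1 - 2 * t) := by
  have ht0 : 0 ≤ t := (norm_nonneg w).trans hw
  have hgeom : HasSum (fun i : ℕ => (4 * t) ^ n * (2 * t) ^ i) ((4 * t) ^ n / (1 - 2 * t)) := by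
    simpa [div_eq_mul_inv] using
      (hasSum_geometric_of_lt_one (by positivity) ht).mul_left ((4 * t) ^ n)
  refine tsum_of_norm_bounded hgeom fun i => ?_
  calc _ ≤ (2 : ℝ) ^ (i + n + (n - 1)) * t ^ (i + n) := norm_choose_mul_pow_le _ _ _ hw
    _ ≤ 2 ^ (i + 2 * n) * t ^ (i + n) := by gcongr 2 ^ ?_ * _ <;> first | omega | norm_num
    _ = (4 * t) ^ n * (2 * t) ^ i := by
      rw [pow_add 2 i, pow_mul]; norm_num; ring

lemma norm_one_sub_mul_negBinomialPartialSum_le {n : ℕ} (hn : n ≠ 0) {w : 𝕜} {t : ℝ}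
    (hw : ‖w‖ ≤ t) (ht : 2 * t < 1) :
    ‖1 - (1 - w) ^ n * negBinomialPartialSum n w‖ ≤ (4 * t * (1 + t)) ^ n / (1 - 2 * t) := by
  have ht0 : 0 ≤ t := (norm_nonneg w).trans hw
  have h1w : ‖1 - w‖ ≤ 1 + t := (norm_sub_le _ _).trans (by rw [norm_one]; linarith)
  rw [one_sub_mul_negBinomialPartialSum hn (by linarith), norm_mul, norm_pow]
  calc _ ≤ (1 + t) ^ n * ((4 * t) ^ n / (1 - 2 * t)) := by
        gcongr
        exact norm_tsum_choose_mul_pow_add_le n hw ht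
    _ = (4 * t * (1 + t)) ^ n / (1 - 2 * t) := by rw [mul_pow (4 * t)]; ring

lemma norm_mul_negBinomialPartialSum_le (n : ℕ) {w : 𝕜} {t : ℝ} (hw : ‖1 - w‖ ≤ t) :
    ‖(1 - w) ^ n * negBinomialPartialSum n w‖ ≤ n * (4 * t * (1 + t)) ^ n := by
  have ht0 : 0 ≤ t := (norm_nonneg _).trans hw
  have hw' : ‖w‖ ≤ 1 + t := by
    simpa using norm_sub_le_of_le (norm_one (α := 𝕜)).le hw
  rw [norm_mul, norm_pow]
  calc _ ≤ t ^ n * (n * (4 * (1 + t)) ^ n) := by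
        gcongr
        exact norm_negBinomialPartialSum_le n (by linarith) hw'
    _ = n * (4 * t * (1 + t)) ^ n := by rw [mul_pow 4 (1 + t), mul_pow (4 * t)]; ring

end NegBinomial

lemma ensembleAvg_eq_mul_negBinomialPartialSum (n : ℕ) (β z : ℂ) :
    ensembleAvg n β z = (1 - z / β) ^ n * negBinomialPartialSum n (z / β) := by
  rw [ensembleAvg, negBinomialPartialSum]
  congr 1
  refine sum_congr rfl fun j hj => ?_
  have hjn := mem_range.1 hj
  rw [Nat.cast_choose ℂ (Nat.le_add_left (n - 1) j), Nat.add_sub_cancel,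
    show n + j - 1 = j + (n - 1) by omega]
  ring

lemma four_mul_mul_one_add_lt_one {t : ℝ} (ht0 : 0 ≤ t) (ht : t < 1 / (2 * √2 + 2)) :
    4 * t * (1 + t) < 1 := by
  have hsqrt : 2 * t + 1 < √2 := by
    rw [lt_div_iff₀ (by positivity)] at ht
    nlinarith [Real.mul_self_sqrt (show (0 : ℝ) ≤ 2 by norm_num), Real.one_lt_sqrt_two]
  nlinarith [Real.sq_sqrt (show (0 : ℝ) ≤ 2 by norm_num)]

lemma div_lt_one_div_of_lt_div {r β c : ℝ} (hβ : 0 < β) (h : r < β / c) : r / β < 1 / c := by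
  rwa [div_lt_iff₀ hβ, one_div_mul_eq_div]

lemma eventually_norm_one_sub_ensembleAvg_lt {β r ε : ℝ} (hβ : 0 < β) (hr : 0 ≤ r)
    (hr' : r < β / (2 * √2 + 2)) (hε : 0 < ε) :
    ∀ᶠ n in atTop, ∀ z : ℂ, ‖z‖ ≤ r → ‖1 - ensembleAvg n β z‖ < ε := by
  set t := r / β
  have ht0 : 0 ≤ t := by positivity
  have hq := four_mul_mul_one_add_lt_one ht0 (div_lt_one_div_of_lt_div hβ hr')
  have hlim : Tendsto (fun n : ℕ => (4 * t * (1 + t)) ^ n / (1 - 2 * t)) atTop (𝓝 0) := by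
    simpa using (tendsto_pow_atTop_nhds_zero_of_lt_one (by positivity) hq).div_const (1 - 2 * t)
  filter_upwards [hlim.eventually_lt_const hε, eventually_ne_atTop 0] with n hn hn0 z hz
  have hw : ‖z / β‖ ≤ t := by
    rw [norm_div, Complex.norm_real, Real.norm_of_nonneg hβ.le]
    exact div_le_div_of_nonneg_right hz hβ.le
  rw [ensembleAvg_eq_mul_negBinomialPartialSum]
  exact (norm_one_sub_mul_negBinomialPartialSum_le hn0 hw (by nlinarith)).trans_lt hn

lemma eventually_norm_ensembleAvg_lt {β α ε : ℝ} (hβ : 0 < β) (hα : 0 ≤ α)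
    (hα' : α < β / (2 * √2 + 2)) (hε : 0 < ε) :
    ∀ᶠ n in atTop, ∀ z : ℂ, ‖z - β‖ ≤ α → ‖ensembleAvg n β z‖ < ε := by
  set t := α / β
  have ht0 : 0 ≤ t := by positivity
  have hq := four_mul_mul_one_add_lt_one ht0 (div_lt_one_div_of_lt_div hβ hα')
  filter_upwards [(tendsto_self_mul_const_pow_of_lt_one (by positivity) hq).eventually_lt_const hε]
    with n hn z hz
  have hw : ‖1 - z / β‖ ≤ t := by
    have hβ0 : (β : ℂ) ≠ 0 := Complex.ofReal_ne_zero.2 hβ.ne'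
    rw [one_sub_div hβ0, norm_div, norm_sub_rev, Complex.norm_real, Real.norm_of_nonneg hβ.le]
    exact div_le_div_of_nonneg_right hz hβ.le
  rw [ensembleAvg_eq_mul_negBinomialPartialSum]
  exact (norm_mul_negBinomialPartialSum_le n hw).trans_lt hn

/-- If `r, α < β/(2√2+2)` then, for `n` large enough, `P̄_n` is uniformly close to `1` on
the closed disk `|z| ≤ r` and uniformly close to `0` on the closed disk `|z - β| ≤ α`. -/
theorem ensembleAvg_cloaking (β r α : ℝ) (hβ : 0 < β) (hr : 0 < r) (hα : 0 < α)
    (hr' : r < β / (2 * Real.sqrt 2 + 2)) (hα' : α < β / (2 * Real.sqrt 2 + 2)) :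
    ∀ ε : ℝ, 0 < ε → ∃ N : ℕ, ∀ n : ℕ, N ≤ n →
      (∀ z : ℂ, ‖z‖ ≤ r → ‖1 - ensembleAvg n β z‖ < ε) ∧
      (∀ z : ℂ, ‖z - β‖ ≤ α → ‖ensembleAvg n β z‖ < ε) := fun _ hε =>
  eventually_atTop.1 <| (eventually_norm_one_sub_ensembleAvg_lt hβ hr.le hr' hε).and
    (eventually_norm_ensembleAvg_lt hβ hα.le hα' hε)
end
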